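/- If x is a vertex of a GT-polytope GT(λ,μ) ⊂ X_n and q is a denominator appearing (in reduced form) among the entries of x with q > 1, then every s × s submatrix of the tiling matrix A_𝒫 of x has determinant divisible by q, where s is the number of free tiles. Consequently, since some s × s submatrix has nonzero determinant, q is bounded by the maximum absolute value of s × s subdeterminants of tiling matrices in X_n. -/

import Mathlib

/-- Valid index positions of a triangular array of size `n`. -/
abbrev IdxP (n i j : ℕ) : Prop := 1 ≤ i ∧ i ≤ j ∧ j ≤ n

/-- A Gelfand--Tsetlin pattern of size `n` (entries outside the triangle are ignored). -/
def IsGTPattern (n : ℕ) (x : ℕ → ℕ → ℝ) : Prop :=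
  (∀ i j, IdxP n i j → 0 ≤ x i j) ∧
  (∀ i j, 1 ≤ i → i ≤ j → j + 1 ≤ n → x i (j + 1) ≥ x i j ∧ x i j ≥ x (i + 1) (j + 1))

/-- Membership in the Gelfand--Tsetlin polytope `GT(λ,μ)`: a GT-pattern, vanishing outside the
triangle, with top row `λ` and `j`-th row sum `μ₁ + ⋯ + μⱼ`. -/
def GTMem (n : ℕ) (lam mu : ℕ → ℤ) (x : ℕ → ℕ → ℝ) : Prop :=
  IsGTPattern n x ∧
  (∀ i j, ¬ IdxP n i j → x i j = 0) ∧
  (∀ i, 1 ≤ i → i ≤ n → x i n = (lam i : ℝ)) ∧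
  (∀ j, 1 ≤ j → j ≤ n → ∑ i ∈ Finset.Icc 1 j, x i j = ∑ t ∈ Finset.Icc 1 j, (mu t : ℝ))

/-- Adjacency of positions in the triangular arrangement: offsets `(±1,±1)` and `(0,±1)`. -/
def Adj (p q : ℕ × ℕ) : Prop :=
  (q.1 = p.1 + 1 ∧ q.2 = p.2 + 1) ∨ (q.1 = p.1 ∧ q.2 = p.2 + 1) ∨
  (p.1 = q.1 + 1 ∧ p.2 = q.2 + 1) ∨ (p.1 = q.1 ∧ p.2 = q.2 + 1)

/-- One step of the tile relation: adjacent valid positions carrying equal entries. -/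
def Step (n : ℕ) (x : ℕ → ℕ → ℝ) (p q : ℕ × ℕ) : Prop :=
  IdxP n p.1 p.2 ∧ IdxP n q.1 q.2 ∧ Adj p q ∧ x p.1 p.2 = x q.1 q.2

/-- Two positions lie in the same tile of the tiling of `x`. -/
def SameTile (n : ℕ) (x : ℕ → ℕ → ℝ) (p q : ℕ × ℕ) : Prop :=
  Relation.ReflTransGen (Step n x) p q

/-- A tile of the tiling of `x`. -/
def IsTile (n : ℕ) (x : ℕ → ℕ → ℝ) (T : Set (ℕ × ℕ)) : Prop :=
  ∃ p : ℕ × ℕ, IdxP n p.1 p.2 ∧ T = {q | SameTile n x p q}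

/-- A free tile: a tile meeting neither the bottom entry `(1,1)` nor the top row `(i,n)`. -/
def IsFreeTile (n : ℕ) (x : ℕ → ℕ → ℝ) (T : Set (ℕ × ℕ)) : Prop :=
  IsTile n x T ∧ ((1, 1) : ℕ × ℕ) ∉ T ∧ ∀ i, ((i, n) : ℕ × ℕ) ∉ T

/-- The tiling matrix over `ℤ`. -/
noncomputable def tileMatZ (n s : ℕ) (P : Fin s → Set (ℕ × ℕ)) :
    Matrix (Fin (n - 2)) (Fin s) ℤ :=
  fun j k => ({i : ℕ | (i, j.1 + 2) ∈ P k}.ncard : ℤ)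

open Filter Function Topology Matrix

/-!
At a vertex `x`, write `w k` for the value of `x` on the free tile `P k`. Every entry of `x`
outside the free tiles is an integer, since its tile meets the bottom entry or the top row; as
the row sums of `x` are integers, so is every coordinate of `A_𝒫 w`. For an `s × s` submatrix
`N` of `A_𝒫`, Cramer's rule `det N • w = adj N *ᵥ (N *ᵥ w)` then makes `det N * w k` an integer,
and a coordinate of `w` with reduced denominator `q` forces `q ∣ det N`.

The kernel of `A_𝒫` is trivial: spreading a kernel vector over the free tiles gives a direction
`u` that is constant on tiles, vanishes where `x` does and on the bottom entry and top row, and has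
zero row sums, so `x ± ε u` stays in `GT(λ,μ)` for small `ε`, contradicting extremality unless
`u = 0`. Hence some `s × s` minor is nonzero, and it is a nonzero multiple of `q`.
-/

theorem Matrix.exists_injective_det_submatrix_ne_zero {m n K : Type*} [Field K] [Fintype m]
    [Fintype n] [DecidableEq n] (B : Matrix m n K) (hB : ∀ v, B *ᵥ v = 0 → v = 0) :
    ∃ rows : n → m, Function.Injective rows ∧ (B.submatrix rows id).det ≠ 0 := by
  have hinj : Function.Injective B.mulVecLin :=
    (injective_iff_map_eq_zero _).2 hB
  have hrank : Module.finrank K (Submodule.span K (Set.range B.row)) = Fintype.card n := by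
    rw [← B.rank_eq_finrank_span_row, Matrix.rank, LinearMap.finrank_range_of_inj hinj,
      Module.finrank_fintype_fun_eq_card]
  obtain ⟨κ, a, ha, hspan, hli⟩ := exists_linearIndependent' K B.row
  have : Finite κ := Finite.of_injective a ha
  have := Fintype.ofFinite κ
  have hcard : Fintype.card n = Fintype.card κ := by
    rw [linearIndependent_iff_card_eq_finrank_span.1 hli, Set.finrank, hspan, hrank]
  let e := Fintype.equivOfCardEq hcard
  refine ⟨a ∘ e, ha.comp e.injective, ?_⟩
  rw [← isUnit_iff_ne_zero, ← Matrix.isUnit_iff_isUnit_det,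
    ← Matrix.linearIndependent_rows_iff_isUnit]
  exact hli.comp e e.injective

theorem Matrix.map_det_mul_mem_range {ι R S : Type*} [Fintype ι] [DecidableEq ι] [CommRing R]
    [CommRing S] (f : R →+* S) (N : Matrix ι ι R) {w : ι → S}
    (hw : ∀ a, (N.map f *ᵥ w) a ∈ f.range) (k : ι) : f N.det * w k ∈ f.range := by
  have hcramer : f N.det • w = (N.map f).adjugate *ᵥ (N.map f *ᵥ w) := by
    rw [Matrix.mulVec_mulVec, Matrix.adjugate_mul, Matrix.smul_mulVec, Matrix.one_mulVec,
      RingHom.map_det]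
    rfl
  rw [← smul_eq_mul, ← Pi.smul_apply, hcramer, ← RingHom.mapMatrix_apply, ← RingHom.map_adjugate]
  exact Subring.sum_mem _ fun a _ => Subring.mul_mem _ ⟨_, rfl⟩ (hw a)

theorem Rat.den_dvd_of_mul_eq_intCast {K : Type*} [Field K] [CharZero K] {d m : ℤ} {r : ℚ}
    (h : (d : K) * r = m) : (r.den : ℤ) ∣ d := by
  rcases eq_or_ne d 0 with rfl | hd
  · exact dvd_zero _
  have hq : (d : ℚ) * r = m := by exact_mod_cast h
  have hr : r = Rat.divInt m d := by
    rw [Rat.divInt_eq_div, ← hq]; field_simp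
  exact hr ▸ Rat.den_dvd m d

theorem Matrix.den_dvd_det_of_mulVec_mem_range {ι : Type*} [Fintype ι] [DecidableEq ι]
    (N : Matrix ι ι ℤ) {w : ι → ℝ}
    (hw : ∀ a, (N.map (Int.castRingHom ℝ) *ᵥ w) a ∈ (Int.castRingHom ℝ).range)
    {k : ι} {r : ℚ} (hk : w k = r) : (r.den : ℤ) ∣ N.det := by
  obtain ⟨m, hm⟩ := N.map_det_mul_mem_range _ hw k
  rw [eq_intCast, eq_intCast, hk] at hm
  exact Rat.den_dvd_of_mul_eq_intCast hm.symm

theorem eventually_add_mul_le_add_mul {a b α β : ℝ} (hab : a ≤ b) (h : a = b → α = β) :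
    ∀ᶠ t in 𝓝 (0 : ℝ), a + t * α ≤ b + t * β := by
  rcases hab.eq_or_lt with rfl | hlt
  · exact Eventually.of_forall fun t => by rw [h rfl]
  · have hf : ContinuousAt (fun t : ℝ => a + t * α) 0 := by fun_prop
    have hg : ContinuousAt (fun t : ℝ => b + t * β) 0 := by fun_prop
    exact (hf.eventually_lt hg (by simpa using hlt)).mono fun _ => le_of_lt

theorem eq_zero_of_mem_extremePoints_of_eventually_add_smul_mem {E : Type*} [AddCommGroup E]
    [Module ℝ E] {S : Set E} {x u : E} (hx : x ∈ S.extremePoints ℝ)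
    (h : ∀ᶠ t in 𝓝 (0 : ℝ), x + t • u ∈ S) : u = 0 := by
  obtain ⟨ε, hε, hball⟩ := Metric.eventually_nhds_iff.1 h
  have hmem : ∀ t, |t| < ε → x + t • u ∈ S := fun t ht => hball (by simpa using ht)
  have hδ : |ε / 2| < ε := by rw [abs_of_pos (by positivity)]; linarith
  have hseg : x ∈ openSegment ℝ (x + (ε / 2) • u) (x + (-(ε / 2)) • u) :=
    ⟨1 / 2, 1 / 2, by norm_num, by norm_num, by norm_num, by module⟩
  have := hx.2 (hmem _ hδ) (hmem _ (by rwa [abs_neg])) hseg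
  rw [add_eq_left, smul_eq_zero] at this
  exact this.resolve_left (by positivity)

section GelfandTsetlin

variable {n : ℕ} {x : ℕ → ℕ → ℝ} {p q : ℕ × ℕ} {T T' : Set (ℕ × ℕ)}

theorem Adj.symm (h : Adj p q) : Adj q p := by
  unfold Adj at *; tauto

theorem Step.symm (h : Step n x p q) : Step n x q p :=
  ⟨h.2.1, h.1, h.2.2.1.symm, h.2.2.2.symm⟩

theorem SameTile.symm (h : SameTile n x p q) : SameTile n x q p := by
  induction h with
  | refl => exact .refl
  | tail _ hstep ih => exact ih.head hstep.symm

theorem SameTile.apply_eq (h : SameTile n x p q) : x p.1 p.2 = x q.1 q.2 := by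
  induction h with
  | refl => rfl
  | tail _ hstep ih => exact ih.trans hstep.2.2.2

theorem SameTile.idxP (hp : IdxP n p.1 p.2) (h : SameTile n x p q) : IdxP n q.1 q.2 := by
  induction h with
  | refl => exact hp
  | tail _ hstep _ => exact hstep.2.1

namespace IsTile

theorem mem_of_sameTile (hT : IsTile n x T) (hp : p ∈ T) (h : SameTile n x p q) : q ∈ T := by
  obtain ⟨c, -, rfl⟩ := hT
  exact Relation.ReflTransGen.trans hp h

theorem idxP_of_mem (hT : IsTile n x T) (hp : p ∈ T) : IdxP n p.1 p.2 := by
  obtain ⟨c, hc, rfl⟩ := hT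
  exact hp.idxP hc

theorem exists_forall_apply_eq (hT : IsTile n x T) : ∃ a, ∀ p ∈ T, x p.1 p.2 = a := by
  obtain ⟨c, -, rfl⟩ := hT
  exact ⟨x c.1 c.2, fun p hp => (SameTile.apply_eq hp).symm⟩

theorem eq_of_mem (hT : IsTile n x T) (hT' : IsTile n x T') (hp : p ∈ T) (hp' : p ∈ T') :
    T = T' := by
  obtain ⟨c, -, rfl⟩ := hT
  obtain ⟨c', -, rfl⟩ := hT'
  ext q
  exact ⟨fun h => Relation.ReflTransGen.trans hp' (SameTile.symm hp |>.trans h),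
    fun h => Relation.ReflTransGen.trans hp (SameTile.symm hp' |>.trans h)⟩

end IsTile

theorem IsGTPattern.exists_sameTile_top_of_eq_zero (hx : IsGTPattern n x) {i j : ℕ}
    (hij : IdxP n i j) (h0 : x i j = 0) : ∃ i', SameTile n x (i, j) (i', n) := by
  induction hd : n - j generalizing i j with
  | zero =>
    obtain rfl : j = n := by omega
    exact ⟨i, .refl⟩
  | succ d ih =>
    have hjn : j + 1 ≤ n := by omega
    have hidx : IdxP n (i + 1) (j + 1) := ⟨by omega, by omega, hjn⟩
    have h0' : x (i + 1) (j + 1) = 0 :=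
      le_antisymm (h0 ▸ (hx.2 i j hij.1 hij.2.1 hjn).2) (hx.1 _ _ hidx)
    have hstep : Step n x (i, j) (i + 1, j + 1) :=
      ⟨hij, hidx, Or.inl ⟨rfl, rfl⟩, h0.trans h0'.symm⟩
    obtain ⟨i', hi'⟩ := ih hidx h0' (by omega)
    exact ⟨i', Relation.ReflTransGen.head hstep hi'⟩

theorem IsGTPattern.pos_of_mem_isFreeTile (hx : IsGTPattern n x) (hT : IsFreeTile n x T)
    (hp : p ∈ T) : 0 < x p.1 p.2 := by
  have hidx := hT.1.idxP_of_mem hp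
  refine (hx.1 _ _ hidx).lt_of_ne fun h0 => ?_
  obtain ⟨i', hi'⟩ := hx.exists_sameTile_top_of_eq_zero hidx h0.symm
  exact hT.2.2 i' (hT.1.mem_of_sameTile hp hi')

theorem GTMem.apply_mem_range_intCast {lam mu : ℕ → ℤ} {ι : Type*} {P : ι → Set (ℕ × ℕ)}
    (hx : GTMem n lam mu x) (hPall : ∀ T, IsFreeTile n x T → ∃ k, P k = T) {i j : ℕ}
    (hij : IdxP n i j) (hfree : ∀ k, (i, j) ∉ P k) : x i j ∈ (Int.castRingHom ℝ).range := by
  set T := {q | SameTile n x (i, j) q}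
  have hT : IsTile n x T := ⟨(i, j), hij, rfl⟩
  have hnotfree : ¬ IsFreeTile n x T := fun hf => by
    obtain ⟨k, hk⟩ := hPall T hf
    exact hfree k (hk ▸ .refl)
  simp only [IsFreeTile, hT, true_and, not_and_or, not_not, not_forall] at hnotfree
  rcases hnotfree with h11 | ⟨i', hi'⟩
  · have hrow := hx.2.2.2 1 le_rfl (by omega)
    simp only [Finset.Icc_self, Finset.sum_singleton] at hrow
    exact ⟨mu 1, by rw [SameTile.apply_eq h11, hrow]; rfl⟩
  · have hi'n := hT.idxP_of_mem hi'
    exact ⟨lam i', by rw [SameTile.apply_eq hi', hx.2.2.1 i' hi'n.1 hi'n.2.1]; rfl⟩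

theorem pairwise_disjoint_of_isTile {ι : Type*} {P : ι → Set (ℕ × ℕ)}
    (hP : ∀ k, IsTile n x (P k)) (hinj : Function.Injective P) : Pairwise (Disjoint on P) :=
  fun k k' hne => Set.disjoint_left.2 fun _ hp hp' =>
    hne (hinj ((hP k).eq_of_mem (hP k') hp hp'))

theorem GTMem.eventually_add_smul {lam mu : ℕ → ℤ} {u : ℕ → ℕ → ℝ} (hx : GTMem n lam mu x)
    (hu_out : ∀ i j, ¬ IdxP n i j → u i j = 0)
    (hu_top : ∀ i, 1 ≤ i → i ≤ n → u i n = 0)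
    (hu_row : ∀ j, 1 ≤ j → j ≤ n → ∑ i ∈ Finset.Icc 1 j, u i j = 0)
    (hu_zero : ∀ i j, IdxP n i j → x i j = 0 → u i j = 0)
    (hu_step : ∀ p q, Step n x p q → u p.1 p.2 = u q.1 q.2) :
    ∀ᶠ t in 𝓝 (0 : ℝ), GTMem n lam mu (x + t • u) := by
  have hfin : {p : ℕ × ℕ | IdxP n p.1 p.2}.Finite :=
    ((Set.finite_Iic n).prod (Set.finite_Iic n)).subset fun p hp => ⟨hp.2.1.trans hp.2.2, hp.2.2⟩
  have hnonneg : ∀ᶠ t in 𝓝 (0 : ℝ), ∀ p ∈ {p : ℕ × ℕ | IdxP n p.1 p.2},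
      0 ≤ x p.1 p.2 + t * u p.1 p.2 := by
    refine (eventually_all_finite hfin).2 fun p (hp : IdxP n p.1 p.2) => ?_
    simpa using eventually_add_mul_le_add_mul (hx.1.1 _ _ hp)
      fun h => (hu_zero _ _ hp h.symm).symm
  have hinterlace : ∀ᶠ t in 𝓝 (0 : ℝ), ∀ p ∈ {p : ℕ × ℕ | IdxP n p.1 p.2}, p.2 + 1 ≤ n →
      x p.1 p.2 + t * u p.1 p.2 ≤ x p.1 (p.2 + 1) + t * u p.1 (p.2 + 1) ∧
      x (p.1 + 1) (p.2 + 1) + t * u (p.1 + 1) (p.2 + 1) ≤ x p.1 p.2 + t * u p.1 p.2 := by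
    refine (eventually_all_finite hfin).2 fun p (hp : IdxP n p.1 p.2) => ?_
    by_cases hpn : p.2 + 1 ≤ n
    · obtain ⟨hup, hdown⟩ := hx.1.2 p.1 p.2 hp.1 hp.2.1 hpn
      have hidx_up : IdxP n p.1 (p.2 + 1) := ⟨hp.1, by omega, hpn⟩
      have hidx_down : IdxP n (p.1 + 1) (p.2 + 1) := ⟨by omega, by omega, hpn⟩
      filter_upwards [eventually_add_mul_le_add_mul hup fun h =>
          hu_step p (p.1, p.2 + 1) ⟨hp, hidx_up, Or.inr (Or.inl ⟨rfl, rfl⟩), h⟩,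
        eventually_add_mul_le_add_mul hdown fun h =>
          hu_step (p.1 + 1, p.2 + 1) p ⟨hidx_down, hp, Or.inr (Or.inr (Or.inl ⟨rfl, rfl⟩)), h⟩]
        with t h₁ h₂ using fun _ => ⟨h₁, h₂⟩
    · exact .of_forall fun _ h => absurd h hpn
  filter_upwards [hnonneg, hinterlace] with t hnonneg hinterlace
  refine ⟨⟨fun i j hij => hnonneg (i, j) hij,
    fun i j hi hij hjn => hinterlace (i, j) ⟨hi, hij, by omega⟩ hjn⟩, fun i j hij => ?_,
    fun i hi hin => ?_, fun j hj hjn => ?_⟩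
  · simp [hx.2.1 i j hij, hu_out i j hij]
  · simp [hx.2.2.1 i hi hin, hu_top i hi hin]
  · simp [Finset.sum_add_distrib, ← Finset.mul_sum, hu_row j hj hjn, hx.2.2.2 j hj hjn]

section TileLift

variable {ι : Type*} [Fintype ι] {P : ι → Set (ℕ × ℕ)} {v : ι → ℝ}

variable (P v) in
noncomputable def tileLift : ℕ → ℕ → ℝ := fun i j => ∑ k, (P k).indicator (fun _ => v k) (i, j)

theorem tileLift_of_mem (hP : Pairwise (Disjoint on P)) {i j : ℕ} {k : ι} (h : (i, j) ∈ P k) :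
    tileLift P v i j = v k := by
  rw [tileLift, Finset.sum_eq_single k]
  · exact Set.indicator_of_mem h _
  · exact fun k' _ hk' => Set.indicator_of_notMem (Set.disjoint_left.1 (hP hk'.symm) h) _
  · simp

theorem tileLift_of_forall_notMem {i j : ℕ} (h : ∀ k, (i, j) ∉ P k) : tileLift P v i j = 0 :=
  Finset.sum_eq_zero fun k _ => Set.indicator_of_notMem (h k) _

theorem tileLift_eq_of_forall_mem_iff (h : ∀ k, p ∈ P k ↔ q ∈ P k) :
    tileLift P v p.1 p.2 = tileLift P v q.1 q.2 := by
  refine Finset.sum_congr rfl fun k _ => ?_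
  by_cases hp : p ∈ P k
  · rw [Set.indicator_of_mem hp, Set.indicator_of_mem ((h k).1 hp)]
  · rw [Set.indicator_of_notMem hp, Set.indicator_of_notMem (mt (h k).2 hp)]

theorem sum_tileLift (hP : ∀ k, ∀ p ∈ P k, 1 ≤ p.1 ∧ p.1 ≤ p.2) (j : ℕ) :
    ∑ i ∈ Finset.Icc 1 j, tileLift P v i j = ∑ k, ({i | (i, j) ∈ P k}.ncard : ℝ) * v k := by
  classical
  simp only [tileLift]
  rw [Finset.sum_comm]
  refine Finset.sum_congr rfl fun k _ => ?_
  have hrow : {i | (i, j) ∈ P k} = ↑{i ∈ Finset.Icc 1 j | (i, j) ∈ P k} := by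
    ext i
    simpa using fun h => hP k _ h
  rw [Finset.sum_indicator_eq_sum_filter, Finset.sum_const, hrow, Set.ncard_coe_finset,
    nsmul_eq_mul]

end TileLift

section TilingMatrix

variable {s : ℕ} {P : Fin s → Set (ℕ × ℕ)} {lam mu : ℕ → ℤ}

theorem tileMatZ_map_mulVec_apply (hP : ∀ k, IsTile n x (P k)) (v : Fin s → ℝ)
    (j : Fin (n - 2)) :
    ((tileMatZ n s P).map (Int.castRingHom ℝ) *ᵥ v) j =
      ∑ i ∈ Finset.Icc 1 ((j : ℕ) + 2), tileLift P v i ((j : ℕ) + 2) := by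
  rw [sum_tileLift fun k p hp => ((hP k).idxP_of_mem hp).imp_right And.left]
  simp [mulVec, dotProduct, tileMatZ]

theorem GTMem.tileMatZ_mulVec_mem_range (hx : GTMem n lam mu x)
    (hPfree : ∀ k, IsFreeTile n x (P k)) (hPinj : Function.Injective P)
    (hPall : ∀ T, IsFreeTile n x T → ∃ k, P k = T) {w : Fin s → ℝ}
    (hw : ∀ k, ∀ p ∈ P k, x p.1 p.2 = w k) (j : Fin (n - 2)) :
    ((tileMatZ n s P).map (Int.castRingHom ℝ) *ᵥ w) j ∈ (Int.castRingHom ℝ).range := by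
  have hdisj := pairwise_disjoint_of_isTile (fun k => (hPfree k).1) hPinj
  have hjn : j.1 + 2 ≤ n := by omega
  have hentry : ∀ i ∈ Finset.Icc 1 (j.1 + 2),
      x i (j + 2) - tileLift P w i (j + 2) ∈ (Int.castRingHom ℝ).range := by
    intro i hi
    rw [Finset.mem_Icc] at hi
    by_cases h : ∃ k, (i, j.1 + 2) ∈ P k
    · obtain ⟨k, hk⟩ := h
      rw [tileLift_of_mem hdisj hk, hw k _ hk, sub_self]
      exact zero_mem _
    · rw [not_exists] at h
      rw [tileLift_of_forall_notMem h, sub_zero]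
      exact hx.apply_mem_range_intCast hPall ⟨hi.1, hi.2, hjn⟩ h
  have hrow : ∑ i ∈ Finset.Icc 1 (j.1 + 2), x i (j + 2) ∈ (Int.castRingHom ℝ).range := by
    rw [hx.2.2.2 _ (by omega) hjn]
    exact ⟨∑ t ∈ Finset.Icc 1 (j.1 + 2), mu t, by simp⟩
  rw [tileMatZ_map_mulVec_apply fun k => (hPfree k).1,
    ← sub_sub_cancel (∑ i ∈ Finset.Icc 1 (j.1 + 2), x i (j + 2))
      (∑ i ∈ Finset.Icc 1 (j.1 + 2), tileLift P w i (j + 2)), ← Finset.sum_sub_distrib]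
  exact sub_mem hrow (sum_mem hentry)

theorem eq_zero_of_tileMatZ_mulVec_eq_zero
    (hvert : x ∈ Set.extremePoints ℝ {y | GTMem n lam mu y})
    (hPfree : ∀ k, IsFreeTile n x (P k)) (hPinj : Function.Injective P) {v : Fin s → ℝ}
    (hv : (tileMatZ n s P).map (Int.castRingHom ℝ) *ᵥ v = 0) : v = 0 := by
  have hx : GTMem n lam mu x := hvert.1
  have hP : ∀ k, IsTile n x (P k) := fun k => (hPfree k).1
  have hu : tileLift P v = 0 := by
    refine eq_zero_of_mem_extremePoints_of_eventually_add_smul_mem hvert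
      (hx.eventually_add_smul ?_ ?_ ?_ ?_ ?_)
    · exact fun i j hij => tileLift_of_forall_notMem fun k hk => hij ((hP k).idxP_of_mem hk)
    · exact fun i _ _ => tileLift_of_forall_notMem fun k hk => (hPfree k).2.2 i hk
    · intro j hj hjn
      rcases hjn.eq_or_lt with rfl | hjn
      · exact Finset.sum_eq_zero fun i _ =>
          tileLift_of_forall_notMem fun k hk => (hPfree k).2.2 i hk
      rcases hj.eq_or_lt with rfl | hj
      · simpa using tileLift_of_forall_notMem fun k hk => (hPfree k).2.1 hk
      obtain ⟨j, rfl⟩ : ∃ j', j = j' + 2 := ⟨j - 2, by omega⟩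
      rw [← tileMatZ_map_mulVec_apply hP v (⟨j, by omega⟩ : Fin (n - 2)), hv, Pi.zero_apply]
    · exact fun i j _ h0 => tileLift_of_forall_notMem fun k hk =>
        (hx.1.pos_of_mem_isFreeTile (hPfree k) hk).ne' h0
    · exact fun p q hpq => tileLift_eq_of_forall_mem_iff fun k =>
        ⟨fun h => (hP k).mem_of_sameTile h (.single hpq),
          fun h => (hP k).mem_of_sameTile h (.single hpq.symm)⟩
  funext k
  obtain ⟨c, -, hPk⟩ := hP k
  have hck : c ∈ P k := hPk ▸ .refl
  rw [← tileLift_of_mem (v := v) (pairwise_disjoint_of_isTile hP hPinj) hck, hu]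
  rfl

end TilingMatrix

end GelfandTsetlin

theorem stmt17_general (n s q : ℕ) (hq : 1 < q) (lam mu : ℕ → ℤ) (x : ℕ → ℕ → ℝ)
    (hvert : x ∈ Set.extremePoints ℝ {y | GTMem n lam mu y})
    (P : Fin s → Set (ℕ × ℕ))
    (hPfree : ∀ k, IsFreeTile n x (P k)) (hPinj : Function.Injective P)
    (hPall : ∀ T, IsFreeTile n x T → ∃ k, P k = T)
    (hden : ∃ (i j : ℕ) (r : ℚ), IdxP n i j ∧ x i j = (r : ℝ) ∧ r.den = q) :
    (∀ rows : Fin s → Fin (n - 2), Function.Injective rows →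
      (q : ℤ) ∣ ((tileMatZ n s P).submatrix rows id).det) ∧
    (∃ rows : Fin s → Fin (n - 2), Function.Injective rows ∧
      ((tileMatZ n s P).submatrix rows id).det ≠ 0 ∧
      (q : ℤ) ≤ |((tileMatZ n s P).submatrix rows id).det|) := by
  have hx : GTMem n lam mu x := hvert.1
  choose w hw using fun k => (hPfree k).1.exists_forall_apply_eq
  obtain ⟨i, j, r, hij, hxr, rfl⟩ := hden
  obtain ⟨k₀, hk₀⟩ : ∃ k, (i, j) ∈ P k := by
    by_contra! hfree
    obtain ⟨m, hm⟩ := hx.apply_mem_range_intCast hPall hij hfree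
    rw [eq_intCast] at hm
    have : r = m := by exact_mod_cast hxr.symm.trans hm.symm
    simp [this] at hq
  have hdvd (rows : Fin s → Fin (n - 2)) :
      (r.den : ℤ) ∣ ((tileMatZ n s P).submatrix rows id).det :=
    Matrix.den_dvd_det_of_mulVec_mem_range _
      (fun a => hx.tileMatZ_mulVec_mem_range hPfree hPinj hPall hw (rows a))
      ((hw k₀ _ hk₀).symm.trans hxr)
  obtain ⟨rows, hrows, hdet⟩ :=
    ((tileMatZ n s P).map (Int.castRingHom ℝ)).exists_injective_det_submatrix_ne_zero
      fun _ => eq_zero_of_tileMatZ_mulVec_eq_zero hvert hPfree hPinj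
  rw [Matrix.submatrix_map, ← RingHom.mapMatrix_apply, ← RingHom.map_det,
    map_ne_zero_iff _ (Int.cast_injective)] at hdet
  exact ⟨fun rows _ => hdvd rows, rows, hrows, hdet,
    Int.le_of_dvd (abs_pos.2 hdet) ((dvd_abs _ _).2 (hdvd rows))⟩

/-- If `x` is a vertex of `GT(λ,μ)` and `q > 1` is a reduced denominator of some entry of `x`,
then every `s × s` submatrix of the tiling matrix has determinant divisible by `q`; since some
`s × s` submatrix has nonzero determinant, `q` is bounded by its absolute value. -/
theorem stmt17 (n s q : ℕ) (hq : 1 < q) (lam mu : ℕ → ℤ) (x : ℕ → ℕ → ℝ)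
    (hx : GTMem n lam mu x)
    (hvert : x ∈ Set.extremePoints ℝ {y | GTMem n lam mu y})
    (P : Fin s → Set (ℕ × ℕ))
    (hPfree : ∀ k, IsFreeTile n x (P k)) (hPinj : Function.Injective P)
    (hPall : ∀ T, IsFreeTile n x T → ∃ k, P k = T)
    (hden : ∃ (i j : ℕ) (r : ℚ), IdxP n i j ∧ x i j = (r : ℝ) ∧ r.den = q) :
    (∀ rows : Fin s → Fin (n - 2), Function.Injective rows →
      (q : ℤ) ∣ ((tileMatZ n s P).submatrix rows id).det) ∧
    (∃ rows : Fin s → Fin (n - 2), Function.Injective rows ∧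
      ((tileMatZ n s P).submatrix rows id).det ≠ 0 ∧
      (q : ℤ) ≤ |((tileMatZ n s P).submatrix rows id).det|) :=
  stmt17_general n s q hq lam mu x hvert P hPfree hPinj hPall hden
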